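/- Let γ > 0 and let x be a linearly stable steady state of the SBCM with parameters γ and δ. Then for every persuadable node i there exists a neighbor j of i such that |x_i − x_j| ≤ √(max(δ, 1/γ)). -/

import Mathlib

open Finset Filter

namespace SBCM

variable {V : Type*} [Fintype V] [DecidableEq V]

/-- Sigmoidal influence weight. -/
noncomputable def wt (G : SimpleGraph V) [DecidableRel G.Adj] (γ δ : ℝ) (x : V → ℝ)
    (i j : V) : ℝ :=
  if G.Adj i j then 1 / (1 + Real.exp (γ * (x i - x j) ^ 2 - γ * δ)) else 0

/-- SBCM update operator. -/
noncomputable def F (G : SimpleGraph V) [DecidableRel G.Adj] (Z : Finset V) (γ δ : ℝ)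
    (x : V → ℝ) (i : V) : ℝ :=
  if i ∈ Z then 0
  else (∑ j, wt G γ δ x i j * (x j - x i)) / (∑ j, wt G γ δ x i j)

/-- Jacobian block over the persuadable nodes. -/
noncomputable def Jp (G : SimpleGraph V) [DecidableRel G.Adj] (Z : Finset V) (γ δ : ℝ)
    (x : V → ℝ) : Matrix {v : V // v ∉ Z} {v : V // v ∉ Z} ℝ :=
  fun i j => fderiv ℝ (fun y : V → ℝ => F G Z γ δ y i.val) x (Pi.single (j : V) (1 : ℝ))

/-- `μ` is a (real) eigenvalue of the matrix `M`. -/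
def HasEig {n : Type*} [Fintype n] (M : Matrix n n ℝ) (μ : ℝ) : Prop :=
  ∃ φ : n → ℝ, φ ≠ 0 ∧ M.mulVec φ = μ • φ

/-- All eigenvalues of `M` are strictly negative. -/
def LinStable {n : Type*} [Fintype n] (M : Matrix n n ℝ) : Prop :=
  ∀ μ : ℝ, HasEig M μ → μ < 0

/-- `M` has a strictly positive eigenvalue. -/
def LinUnstable {n : Type*} [Fintype n] (M : Matrix n n ℝ) : Prop :=
  ∃ μ : ℝ, 0 < μ ∧ HasEig M μ

end SBCM

/-!
At a steady state the numerator of every `F i` vanishes, so the Jacobian is `D⁻¹ K`, where `D`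
is the diagonal of strengths and `K` is minus the Laplacian whose edge weights are the
derivatives `φ'(x j - x i)` of the edge flow `φ u = w(u) u`. Since `D⁻¹ K` is similar to the
symmetric `D^{-1/2} K D^{-1/2}`, stability makes `-K` positive definite, so `K i i < 0`. But
`φ' u < 0` once `u ^ 2 > max δ γ⁻¹`, so if every neighbour of `i` were that far away we would
get `K i i = -∑ j, φ'(x j - x i) > 0`.
-/

open Matrix

theorem HasFDerivAt.div_of_eq_zero {𝕜 E : Type*} [NontriviallyNormedField 𝕜]
    [NormedAddCommGroup E] [NormedSpace 𝕜 E] {f g : E → 𝕜} {f' : E →L[𝕜] 𝕜} {x : E}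
    (hf : HasFDerivAt f f' x) (hg : DifferentiableAt 𝕜 g x) (hfx : f x = 0) (hgx : g x ≠ 0) :
    HasFDerivAt (fun y => f y / g y) ((g x)⁻¹ • f') x := by
  have h := (hg.inv hgx).hasFDerivAt.smul hf
  rw [hfx, ContinuousLinearMap.smulRight_zero, add_zero] at h
  exact h.congr_of_eventuallyEq (Eventually.of_forall fun y => div_eq_inv_mul _ _)

namespace SBCM

section LinearAlgebra

variable {n : Type*} [Fintype n]

theorem HasEig.of_mul_eq_mul {A B P : Matrix n n ℝ} (hP : Function.Injective P.mulVec)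
    (h : P * B = A * P) {μ : ℝ} (hB : HasEig B μ) : HasEig A μ := by
  obtain ⟨φ, hφ, hBφ⟩ := hB
  refine ⟨P *ᵥ φ, fun h0 => hφ (hP (by rw [h0, mulVec_zero])), ?_⟩
  rw [mulVec_mulVec, ← h, ← mulVec_mulVec, hBφ, mulVec_smul]

variable [DecidableEq n]

theorem hasEig_eigenvalues {A : Matrix n n ℝ} (hA : A.IsHermitian) (k : n) :
    HasEig A (hA.eigenvalues k) :=
  ⟨hA.eigenvectorBasis k,
    fun h => hA.eigenvectorBasis.orthonormal.ne_zero k (by ext i; simpa using congrFun h i),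
    hA.mulVec_eigenvectorBasis k⟩

theorem LinStable.posDef_neg {A : Matrix n n ℝ} (hA : A.IsHermitian) (h : LinStable A) :
    (-A).PosDef := by
  refine hA.neg.posDef_iff_eigenvalues_pos.mpr fun k => ?_
  obtain ⟨φ, hφ, hAφ⟩ := hasEig_eigenvalues hA.neg k
  have : HasEig A (-hA.neg.eigenvalues k) := ⟨φ, hφ, by rw [neg_smul, ← hAφ, neg_mulVec, neg_neg]⟩
  linarith [h _ this]

theorem LinStable.diag_neg_of_diagonal_mul {K : Matrix n n ℝ} (hK : K.IsHermitian) {d : n → ℝ}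
    (hd : ∀ i, 0 < d i) (h : LinStable (diagonal d * K)) (i : n) : K i i < 0 := by
  set t : n → ℝ := fun i => √(d i)
  have ht : ∀ i, 0 < t i := fun i => Real.sqrt_pos.mpr (hd i)
  have hB : (diagonal t * K * diagonal t).IsHermitian := by
    simpa [diagonal_conjTranspose] using isHermitian_conjTranspose_mul_mul (diagonal t) hK
  have hinj : Function.Injective (diagonal t).mulVec := fun φ ψ hφψ => funext fun j => by
    simpa [mulVec_diagonal, (ht j).ne'] using congrFun hφψ j
  have hsim : diagonal t * (diagonal t * K * diagonal t) = diagonal d * K * diagonal t := by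
    rw [← mul_assoc, ← mul_assoc, diagonal_mul_diagonal]
    congr 3
    funext j; exact Real.mul_self_sqrt (hd j).le
  have hBstab : LinStable (diagonal t * K * diagonal t) := fun μ hμ =>
    h μ (hμ.of_mul_eq_mul hinj hsim)
  have hBii : 0 < -(t i * K i i * t i) := by
    simpa [mul_diagonal, diagonal_mul] using (hBstab.posDef_neg hB).diag_pos (i := i)
  by_contra! hKii
  linarith [mul_nonneg (mul_nonneg (ht i).le hKii) (ht i).le]

end LinearAlgebra

section Coupling

variable (γ δ : ℝ)

noncomputable def sigmoid (u : ℝ) : ℝ := 1 / (1 + Real.exp (γ * u ^ 2 - γ * δ))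

noncomputable def flow (u : ℝ) : ℝ := sigmoid γ δ u * u

noncomputable def flowDeriv (u : ℝ) : ℝ :=
  sigmoid γ δ u * (1 - 2 * γ * u ^ 2 * (1 - sigmoid γ δ u))

variable {γ δ}

theorem sigmoid_pos (u : ℝ) : 0 < sigmoid γ δ u := by
  unfold sigmoid; positivity

theorem sigmoid_neg (u : ℝ) : sigmoid γ δ (-u) = sigmoid γ δ u := by
  simp [sigmoid]

theorem flowDeriv_neg (u : ℝ) : flowDeriv γ δ (-u) = flowDeriv γ δ u := by
  simp [flowDeriv, sigmoid_neg]

variable (γ δ)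

theorem hasDerivAt_sigmoid (u : ℝ) :
    HasDerivAt (sigmoid γ δ) (-(2 * γ * u) * (sigmoid γ δ u * (1 - sigmoid γ δ u))) u := by
  have hexp : HasDerivAt (fun v => 1 + Real.exp (γ * v ^ 2 - γ * δ))
      (Real.exp (γ * u ^ 2 - γ * δ) * (γ * (2 * u))) u := by
    simpa using ((((hasDerivAt_pow 2 u).const_mul γ).sub_const (γ * δ)).exp.const_add 1)
  have hne : 1 + Real.exp (γ * u ^ 2 - γ * δ) ≠ 0 := by positivity
  have hfun : sigmoid γ δ = fun v => (1 + Real.exp (γ * v ^ 2 - γ * δ))⁻¹ :=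
    funext fun v => one_div _
  rw [hfun]
  refine (hexp.inv hne).congr_deriv ?_
  field_simp
  ring

theorem hasDerivAt_flow (u : ℝ) : HasDerivAt (flow γ δ) (flowDeriv γ δ u) u :=
  ((hasDerivAt_sigmoid γ δ u).mul (hasDerivAt_id u)).congr_deriv (by
    simp only [flowDeriv, id]; ring)

variable {γ δ}

theorem flowDeriv_neg_of_lt_sq (hγ : 0 < γ) {u : ℝ} (hu : max δ γ⁻¹ < u ^ 2) :
    flowDeriv γ δ u < 0 := by
  have hδu : γ * δ < γ * u ^ 2 := mul_lt_mul_of_pos_left ((le_max_left _ _).trans_lt hu) hγ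
  have hγu : 1 < γ * u ^ 2 := by
    simpa [hγ.ne'] using mul_lt_mul_of_pos_left ((le_max_right _ _).trans_lt hu) hγ
  have hexp : 1 < Real.exp (γ * u ^ 2 - γ * δ) := Real.one_lt_exp_iff.mpr (by linarith)
  have hhalf : sigmoid γ δ u < 1 / 2 := by
    unfold sigmoid
    rw [div_lt_div_iff₀ (by positivity) two_pos]
    linarith
  refine mul_neg_of_pos_of_neg (sigmoid_pos u) ?_
  nlinarith

end Coupling

section Graph

variable {V : Type*} (G : SimpleGraph V) [DecidableRel G.Adj] (γ δ : ℝ) (x : V → ℝ)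

theorem wt_eq_sigmoid (i j : V) :
    wt G γ δ x i j = if G.Adj i j then sigmoid γ δ (x j - x i) else 0 := by
  rw [wt, sigmoid, ← neg_sub (x j) (x i), neg_sq]

theorem wt_mul_sub_eq_flow (i j : V) :
    wt G γ δ x i j * (x j - x i) = if G.Adj i j then flow γ δ (x j - x i) else 0 := by
  rw [wt_eq_sigmoid]; split_ifs <;> simp [flow]

noncomputable def edgeGain (i j : V) : ℝ :=
  if G.Adj i j then flowDeriv γ δ (x j - x i) else 0

theorem edgeGain_comm (i j : V) : edgeGain G γ δ x i j = edgeGain G γ δ x j i := by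
  unfold edgeGain
  rw [← neg_sub (x i) (x j), flowDeriv_neg]
  simp only [G.adj_comm]

variable [Fintype V]

theorem sum_wt_pos {i : V} (hi : ∃ j, G.Adj i j) : 0 < ∑ j, wt G γ δ x i j := by
  obtain ⟨j, hj⟩ := hi
  refine Finset.sum_pos' (fun k _ => ?_) ⟨j, Finset.mem_univ j, ?_⟩
  · rw [wt_eq_sigmoid]; split_ifs
    exacts [(sigmoid_pos _).le, le_rfl]
  · rw [wt_eq_sigmoid, if_pos hj]; exact sigmoid_pos _

theorem differentiableAt_sum_wt (i : V) :
    DifferentiableAt ℝ (fun y : V → ℝ => ∑ j, wt G γ δ y i j) x := by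
  simp only [wt_eq_sigmoid]
  refine DifferentiableAt.fun_sum fun j _ => ?_
  split_ifs
  · exact ((hasDerivAt_sigmoid γ δ _).differentiableAt).comp x (by fun_prop)
  · exact differentiableAt_const 0

theorem hasFDerivAt_wt_mul_sub (i j : V) :
    HasFDerivAt (fun y : V → ℝ => wt G γ δ y i j * (y j - y i))
      (edgeGain G γ δ x i j •
        ((ContinuousLinearMap.proj j : (V → ℝ) →L[ℝ] ℝ) - ContinuousLinearMap.proj i)) x := by
  simp only [wt_mul_sub_eq_flow, edgeGain]
  split_ifs
  · exact (hasDerivAt_flow γ δ _).comp_hasFDerivAt x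
      ((hasFDerivAt_apply j x).sub (hasFDerivAt_apply i x))
  · simpa using hasFDerivAt_const (0 : ℝ) x

variable [DecidableEq V]

noncomputable def gainMatrix : Matrix V V ℝ :=
  of (edgeGain G γ δ x) - diagonal fun i => ∑ j, edgeGain G γ δ x i j

theorem gainMatrix_isHermitian : (gainMatrix G γ δ x).IsHermitian := by
  refine IsHermitian.sub ?_ (isHermitian_diagonal _)
  ext i j
  simp [edgeGain_comm G γ δ x i j]

theorem gainMatrix_apply_self (i : V) :
    gainMatrix G γ δ x i i = -∑ j, edgeGain G γ δ x i j := by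
  simp [gainMatrix, edgeGain]

theorem gainMatrix_apply_self_pos (hγ : 0 < γ) {i : V} (hi : ∃ j, G.Adj i j)
    (hfar : ∀ j, G.Adj i j → √(max δ γ⁻¹) < |x i - x j|) : 0 < gainMatrix G γ δ x i i := by
  have hneg : ∀ k, G.Adj i k → edgeGain G γ δ x i k < 0 := fun k hk => by
    rw [edgeGain, if_pos hk]
    refine flowDeriv_neg_of_lt_sq hγ ?_
    rw [← sq_abs, abs_sub_comm]
    exact Real.lt_sq_of_sqrt_lt (hfar k hk)
  obtain ⟨j, hj⟩ := hi
  rw [gainMatrix_apply_self, neg_pos]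
  refine Finset.sum_neg' (fun k _ => ?_) ⟨j, Finset.mem_univ j, hneg j hj⟩
  by_cases hk : G.Adj i k
  · exact (hneg k hk).le
  · simp [edgeGain, hk]

theorem Jp_eq_diagonal_mul (Z : Finset V) (hnbr : ∀ i : V, i ∉ Z → ∃ j, G.Adj i j)
    (hss : ∀ i, F G Z γ δ x i = 0) :
    Jp G Z γ δ x = diagonal (fun p : {v // v ∉ Z} => (∑ j, wt G γ δ x p j)⁻¹) *
      (gainMatrix G γ δ x).submatrix (↑) (↑) := by
  ext p q
  have hS := (sum_wt_pos G γ δ x (hnbr p p.2)).ne'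
  have hF : (fun y => F G Z γ δ y p) =
      fun y => (∑ j, wt G γ δ y p j * (y j - y p)) / ∑ j, wt G γ δ y p j :=
    funext fun y => if_neg p.2
  have hN : ∑ j, wt G γ δ x p j * (x j - x p) = 0 := by
    have h := hss p
    rw [F, if_neg p.2, div_eq_zero_iff] at h
    exact h.resolve_right hS
  have hderiv := (HasFDerivAt.fun_sum fun j _ => hasFDerivAt_wt_mul_sub G γ δ x p j).div_of_eq_zero
    (differentiableAt_sum_wt G γ δ x p) hN hS
  rw [Jp, hF, hderiv.fderiv, diagonal_mul]
  simp [gainMatrix, Pi.single_apply, mul_sub, Finset.sum_sub_distrib, diagonal_apply]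

end Graph

end SBCM

theorem stmt_4 {V : Type*} [Fintype V] [DecidableEq V]
    (G : SimpleGraph V) [DecidableRel G.Adj] (Z : Finset V)
    (hnbr : ∀ i : V, i ∉ Z → ∃ j, G.Adj i j)
    (γ δ : ℝ) (hγ : 0 < γ)
    (x : V → ℝ) (hss : ∀ i, SBCM.F G Z γ δ x i = 0)
    (hstab : SBCM.LinStable (SBCM.Jp G Z γ δ x)) :
    ∀ i : V, i ∉ Z → ∃ j, G.Adj i j ∧ |x i - x j| ≤ Real.sqrt (max δ γ⁻¹) := by
  intro i hi
  by_contra! hfar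
  rw [SBCM.Jp_eq_diagonal_mul G γ δ x Z hnbr hss] at hstab
  have hneg := hstab.diag_neg_of_diagonal_mul
    ((SBCM.gainMatrix_isHermitian G γ δ x).submatrix ((↑) : {v // v ∉ Z} → V))
    (fun p => inv_pos.mpr (SBCM.sum_wt_pos G γ δ x (hnbr p p.2))) ⟨i, hi⟩
  exact (hneg.trans (SBCM.gainMatrix_apply_self_pos G γ δ x hγ (hnbr i hi) hfar)).false
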